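/- Let n ≥ 1 be an integer and k ≥ 2 an integer. The function q ↦ γ_k(n/q) is strictly convex on the interval (1, ∞). -/

import Mathlib

/-!
For `q > 1` the functional equation of `Γ` turns `γ_k(n/q)` into the product
`F = ∏_{j<k} g_j` of the positive Möbius factors `g_j(q) = ((n+j)q − n)/(jq + n)`.
Writing `a_j = (n+j)/((n+j)q − n)` and `b_j = j/(jq + n)` for the logarithmic derivatives of
numerator and denominator, `F' = F S` with `S = Σ (a_j − b_j)`, so
`F'' = F (S² − Σ (a_j² − b_j²))`. Now `b_0 = 0` and `b_j < a_0 = 1/(q − 1)`, so splitting off the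
term `j = 0` of `S²` gives `S² > Σ (a_j² − b_j²)` as soon as `k ≥ 2`.
-/

open Real

/-- The spectral function `γ_k(x) = Γ(x) Γ(n − x + k) / (Γ(n − x) Γ(x + k))`. -/
noncomputable def gammaFun (n k : ℕ) (x : ℝ) : ℝ :=
  Gamma x * Gamma ((n : ℝ) - x + k) / (Gamma ((n : ℝ) - x) * Gamma (x + k))

open Set Finset

section LogDeriv

variable {𝕜 : Type*} [NontriviallyNormedField 𝕜] {f g : 𝕜 → 𝕜} {f' g' x : 𝕜}

theorem HasDerivAt.div_of_logDeriv (hf : HasDerivAt f f' x) (hg : HasDerivAt g g' x)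
    (hfx : f x ≠ 0) (hgx : g x ≠ 0) :
    HasDerivAt (fun y => f y / g y) (f x / g x * (f' / f x - g' / g x)) x := by
  refine (hf.div hg hgx).congr_deriv ?_
  field_simp

theorem HasDerivAt.const_div_self (hf : HasDerivAt f f' x) (hfx : f x ≠ 0) :
    HasDerivAt (fun y => f' / f y) (-(f' / f x) ^ 2) x := by
  refine ((hasDerivAt_const x f').div hf hfx).congr_deriv ?_
  ring

theorem HasDerivAt.fun_finsetProd_of_logDeriv {ι : Type*} {u : Finset ι} {f : ι → 𝕜 → 𝕜}
    {s : ι → 𝕜} (hf : ∀ i ∈ u, HasDerivAt (f i) (f i x * s i) x) :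
    HasDerivAt (fun y => ∏ i ∈ u, f i y) ((∏ i ∈ u, f i x) * ∑ i ∈ u, s i) x := by
  classical
  refine (HasDerivAt.fun_finsetProd hf).congr_deriv ?_
  rw [mul_sum]
  refine sum_congr rfl fun i hi => ?_
  rw [smul_eq_mul, ← mul_assoc, prod_erase_mul _ _ hi]

end LogDeriv

/-- `(f s)' = f (s² + s')` when `f' = f s`. -/
theorem strictConvexOn_of_hasDerivAt_logDeriv {D : Set ℝ} (hD : Convex ℝ D) (hDo : IsOpen D)
    {f s s' : ℝ → ℝ} (hf : ∀ x ∈ D, HasDerivAt f (f x * s x) x)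
    (hs : ∀ x ∈ D, HasDerivAt s (s' x) x) (hpos : ∀ x ∈ D, 0 < f x * (s x ^ 2 + s' x)) :
    StrictConvexOn ℝ D f := by
  have hf'' : ∀ x ∈ D, HasDerivAt (deriv f) (f x * (s x ^ 2 + s' x)) x := by
    intro x hx
    have hderiv : deriv f =ᶠ[nhds x] fun y => f y * s y :=
      Filter.eventually_of_mem (hDo.mem_nhds hx) fun y hy => (hf y hy).deriv
    refine (((hf x hx).mul (hs x hx)).congr_of_eventuallyEq hderiv).congr_deriv ?_
    ring
  refine StrictMonoOn.strictConvexOn_of_deriv hD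
    (fun x hx => (hf x hx).continuousAt.continuousWithinAt) ?_
  rw [hDo.interior_eq]
  exact strictMonoOn_of_hasDerivWithinAt_pos hD
    (fun x hx => (hf'' x hx).continuousAt.continuousWithinAt)
    (fun x hx => (hf'' x (interior_subset hx)).hasDerivWithinAt)
    (fun x hx => hpos x (interior_subset hx))

theorem Finset.sum_sq_sub_sq_lt_sq_sum_sub {ι : Type*} [DecidableEq ι] {s : Finset ι} {i₀ : ι}
    {a b : ι → ℝ} (hi₀ : i₀ ∈ s) (hs : (s.erase i₀).Nonempty) (hb₀ : b i₀ = 0)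
    (hba : ∀ i ∈ s, b i < a i) (hb : ∀ i ∈ s, b i < a i₀) :
    ∑ i ∈ s, (a i ^ 2 - b i ^ 2) < (∑ i ∈ s, (a i - b i)) ^ 2 := by
  rw [← add_sum_erase s _ hi₀, ← add_sum_erase s _ hi₀, hb₀]
  set t := s.erase i₀
  have hsq : ∑ i ∈ t, (a i - b i) ^ 2 ≤ (∑ i ∈ t, (a i - b i)) ^ 2 :=
    sum_sq_le_sq_sum_of_nonneg fun i hi => (sub_pos.2 (hba i (mem_of_mem_erase hi))).le
  have hcross : ∑ i ∈ t, (a i - b i) * b i < (∑ i ∈ t, (a i - b i)) * a i₀ := by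
    rw [sum_mul]
    exact sum_lt_sum_of_nonempty hs fun i hi =>
      mul_lt_mul_of_pos_left (hb i (mem_of_mem_erase hi)) (sub_pos.2 (hba i (mem_of_mem_erase hi)))
  have hdiff : ∑ i ∈ t, (a i ^ 2 - b i ^ 2)
      = ∑ i ∈ t, (a i - b i) ^ 2 + 2 * ∑ i ∈ t, (a i - b i) * b i := by
    rw [mul_sum, ← sum_add_distrib]
    exact sum_congr rfl fun i _ => by ring
  nlinarith

theorem Real.Gamma_add_nat_eq_mul_prod {x : ℝ} {k : ℕ} (hx : ∀ j < k, x + j ≠ 0) :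
    Gamma (x + k) = Gamma x * ∏ j ∈ range k, (x + j) := by
  induction k with
  | zero => simp
  | succ m ih =>
    rw [Nat.cast_succ, ← add_assoc, Gamma_add_one (hx m m.lt_succ_self),
      ih fun j hj => hx j (hj.trans m.lt_succ_self), prod_range_succ]
    ring

theorem gammaFun_eq_prod {n k : ℕ} {x : ℝ} (hx₀ : 0 < x) (hxn : x < n) :
    gammaFun n k x = ∏ j ∈ range k, (n - x + j) / (x + j) := by
  have hnx : 0 < (n : ℝ) - x := sub_pos.2 hxn
  rw [gammaFun, Gamma_add_nat_eq_mul_prod fun j _ => by positivity,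
    Gamma_add_nat_eq_mul_prod fun j _ => by positivity, prod_div_distrib]
  have := (Gamma_pos_of_pos hx₀).ne'
  have := (Gamma_pos_of_pos hnx).ne'
  field_simp

noncomputable def gammaFactor (n j : ℕ) (q : ℝ) : ℝ := ((n + j) * q - n) / (j * q + n)

noncomputable def numLogDeriv (n j : ℕ) (q : ℝ) : ℝ := (n + j) / ((n + j) * q - n)

noncomputable def denLogDeriv (n j : ℕ) (q : ℝ) : ℝ := j / (j * q + n)

section GammaFactor

variable {n j k : ℕ} {q : ℝ}

theorem hasDerivAt_gammaFactor_num (q : ℝ) :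
    HasDerivAt (fun q : ℝ => ((n : ℝ) + j) * q - n) (n + j) q := by
  simpa using ((hasDerivAt_id q).const_mul ((n : ℝ) + j)).sub_const (n : ℝ)

theorem hasDerivAt_gammaFactor_den (q : ℝ) :
    HasDerivAt (fun q : ℝ => (j : ℝ) * q + n) j q := by
  simpa using ((hasDerivAt_id q).const_mul (j : ℝ)).add_const (n : ℝ)

theorem gammaFactor_num_pos (hn : 0 < n) (hq : 1 < q) : 0 < ((n : ℝ) + j) * q - n := by
  have : (0 : ℝ) < n := by exact_mod_cast hn
  nlinarith [(Nat.cast_nonneg j : (0 : ℝ) ≤ j)]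

theorem gammaFactor_den_pos (hn : 0 < n) (hq : 1 < q) : 0 < (j : ℝ) * q + n := by
  have : (0 : ℝ) < n := by exact_mod_cast hn
  nlinarith [(Nat.cast_nonneg j : (0 : ℝ) ≤ j)]

theorem gammaFactor_pos (hn : 0 < n) (hq : 1 < q) : 0 < gammaFactor n j q :=
  div_pos (gammaFactor_num_pos hn hq) (gammaFactor_den_pos hn hq)

theorem gammaFun_div_eq_prod_gammaFactor (k : ℕ) (hn : 0 < n) (hq : 1 < q) :
    gammaFun n k (n / q) = ∏ j ∈ range k, gammaFactor n j q := by
  have hn' : (0 : ℝ) < n := by exact_mod_cast hn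
  rw [gammaFun_eq_prod (div_pos hn' (one_pos.trans hq)) (div_lt_self hn' hq)]
  refine prod_congr rfl fun j _ => ?_
  have := (gammaFactor_den_pos (j := j) hn hq).ne'
  rw [gammaFactor]
  field_simp
  ring

theorem hasDerivAt_gammaFactor (hn : 0 < n) (hq : 1 < q) :
    HasDerivAt (gammaFactor n j) (gammaFactor n j q * (numLogDeriv n j q - denLogDeriv n j q)) q :=
  (hasDerivAt_gammaFactor_num q).div_of_logDeriv (hasDerivAt_gammaFactor_den q)
    (gammaFactor_num_pos hn hq).ne' (gammaFactor_den_pos hn hq).ne'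

theorem hasDerivAt_numLogDeriv_sub_denLogDeriv (hn : 0 < n) (hq : 1 < q) :
    HasDerivAt (fun q => numLogDeriv n j q - denLogDeriv n j q)
      (-(numLogDeriv n j q ^ 2 - denLogDeriv n j q ^ 2)) q := by
  refine (((hasDerivAt_gammaFactor_num q).const_div_self (gammaFactor_num_pos hn hq).ne').sub
    ((hasDerivAt_gammaFactor_den q).const_div_self (gammaFactor_den_pos hn hq).ne')).congr_deriv ?_
  rw [numLogDeriv, denLogDeriv]
  ring

theorem denLogDeriv_lt_numLogDeriv (hn : 0 < n) (hq : 1 < q) :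
    denLogDeriv n j q < numLogDeriv n j q := by
  have : (0 : ℝ) < n := by exact_mod_cast hn
  rw [denLogDeriv, numLogDeriv,
    div_lt_div_iff₀ (gammaFactor_den_pos hn hq) (gammaFactor_num_pos hn hq)]
  nlinarith [(Nat.cast_nonneg j : (0 : ℝ) ≤ j)]

theorem denLogDeriv_lt_numLogDeriv_zero (hn : 0 < n) (hq : 1 < q) :
    denLogDeriv n j q < numLogDeriv n 0 q := by
  have : (0 : ℝ) < n := by exact_mod_cast hn
  rw [denLogDeriv, numLogDeriv,
    div_lt_div_iff₀ (gammaFactor_den_pos hn hq) (gammaFactor_num_pos hn hq)]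
  nlinarith [(Nat.cast_nonneg j : (0 : ℝ) ≤ j)]

theorem sum_numLogDeriv_sq_sub_denLogDeriv_sq_lt (hn : 0 < n) (hk : 2 ≤ k) (hq : 1 < q) :
    ∑ j ∈ range k, (numLogDeriv n j q ^ 2 - denLogDeriv n j q ^ 2)
      < (∑ j ∈ range k, (numLogDeriv n j q - denLogDeriv n j q)) ^ 2 :=
  sum_sq_sub_sq_lt_sq_sum_sub (mem_range.2 (by omega)) ⟨1, by simp; omega⟩
    (by simp [denLogDeriv]) (fun _ _ => denLogDeriv_lt_numLogDeriv hn hq)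
    (fun _ _ => denLogDeriv_lt_numLogDeriv_zero hn hq)

end GammaFactor

/-- The function `q ↦ γ_k(n/q)` is strictly convex on `(1, ∞)` for `k ≥ 2`. -/
theorem gammaFun_comp_strictConvexOn (n k : ℕ) (hn : 1 ≤ n) (hk : 2 ≤ k) :
    StrictConvexOn ℝ (Set.Ioi (1 : ℝ)) (fun q => gammaFun n k ((n : ℝ) / q)) := by
  have hprod : StrictConvexOn ℝ (Ioi 1) fun q => ∏ j ∈ range k, gammaFactor n j q :=
    strictConvexOn_of_hasDerivAt_logDeriv (convex_Ioi 1) isOpen_Ioi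
      (fun q hq => HasDerivAt.fun_finsetProd_of_logDeriv fun j _ => hasDerivAt_gammaFactor hn hq)
      (fun q hq => (HasDerivAt.fun_sum fun j _ =>
        hasDerivAt_numLogDeriv_sub_denLogDeriv hn hq).congr_deriv (sum_neg_distrib _))
      (fun q hq => mul_pos (prod_pos fun j _ => gammaFactor_pos hn hq)
        (by linarith [sum_numLogDeriv_sq_sub_denLogDeriv_sq_lt hn hk hq]))
  exact hprod.congr fun q hq => (gammaFun_div_eq_prod_gammaFactor k hn hq).symm
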